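/- arXiv:1804.11139 — 3 statements merged into one kernel-verified Lean document; each statement's English description precedes it below -/
import Mathlib

section
/- Energy-Casimir stability of extremal eigenvectors: let 𝕃 be a symmetric operator on a finite-dimensional inner product space with largest eigenvalue λ₁ of multiplicity one, and let μₑ be an eigenvector for λ₁ scaled so that ½‖μₑ‖² = a > 0. Then there exists a smooth function Φ : ℝ → ℝ with Φ'(a) = -λ₁ and Φ''(a) < 0 such that the Hessian of h_Φ(μ) = ½⟨μ, 𝕃μ⟩ + Φ(½‖μ‖²) at μₑ is negative definite. -/
open RealInnerProductSpace

lemma quad_nonneg_lin_zero {A b : ℝ} (hA : 0 ≤ A)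
    (h : ∀ t : ℝ, 0 ≤ A * t ^ 2 + 2 * t * b) : b = 0 := by
  have hpos : (0:ℝ) < A + 1 := by linarith
  have h1 := h (-b / (A + 1))
  have hne : A + 1 ≠ 0 := ne_of_gt hpos
  have hfe : (-b / (A + 1)) * (A + 1) = -b := div_mul_cancel₀ _ hne
  nlinarith [h1, sq_nonneg b, mul_pos hpos hpos, sq_nonneg (-b / (A+1))]

lemma eig_of_eq {V : Type*} [NormedAddCommGroup V] [InnerProductSpace ℝ V]
    (Lop : V →ₗ[ℝ] V) (hsym : ∀ x y : V, ⟪Lop x, y⟫ = ⟪x, Lop y⟫)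
    (lam1 : ℝ) (hmax : ∀ x : V, ⟪x, Lop x⟫ ≤ lam1 * ‖x‖^2)
    (δ : V) (hq : ⟪δ, Lop δ⟫ = lam1 * ‖δ‖^2) : Lop δ = lam1 • δ := by
  have key : ∀ y : V, ⟪lam1 • δ - Lop δ, y⟫ = 0 := by
    intro y
    have hy : ∀ t : ℝ, 0 ≤ (lam1 * ‖y‖^2 - ⟪y, Lop y⟫) * t ^ 2
        + 2 * t * (lam1 * ⟪δ, y⟫ - ⟪δ, Lop y⟫) := by
      intro t
      have h1 := hmax (δ + t • y)
      have hsym1 : ⟪y, Lop δ⟫ = ⟪δ, Lop y⟫ := by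
        rw [real_inner_comm, hsym]
      simp only [map_add, map_smul, inner_add_left, inner_add_right,
        real_inner_smul_left, real_inner_smul_right, smul_eq_mul] at h1
      have hn : ‖δ + t • y‖^2 = ‖δ‖^2 + 2 * t * ⟪δ, y⟫ + t^2 * ‖y‖^2 := by
        rw [← real_inner_self_eq_norm_sq, ← real_inner_self_eq_norm_sq,
          ← real_inner_self_eq_norm_sq]
        simp only [inner_add_left, inner_add_right, real_inner_smul_left,
          real_inner_smul_right]
        rw [real_inner_comm y δ]; ring
      rw [hn, hsym1, hq] at h1
      ring_nf at h1 ⊢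
      linarith [h1]
    have hb := quad_nonneg_lin_zero (by nlinarith [hmax y]) hy
    rw [inner_sub_left, real_inner_smul_left, hsym]
    linarith [hb]
  have hz : lam1 • δ - Lop δ = 0 := inner_self_eq_zero.mp (key _)
  have : Lop δ = lam1 • δ := by
    have := sub_eq_zero.mp hz; exact this.symm
  exact this

/-- Energy-Casimir stability of the top eigenvector: if `λ₁` is the largest
eigenvalue of the symmetric operator `𝕃`, with multiplicity one and eigenvector
`μₑ` scaled so that `½‖μₑ‖² = a > 0`, then there is a smooth `Φ` with
`Φ'(a) = -λ₁`, `Φ''(a) < 0`, making the Hessian of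
`h_Φ(μ) = ½⟨μ, 𝕃μ⟩ + Φ(½‖μ‖²)` at `μₑ` negative definite. -/
theorem energy_casimir_max_stable {V : Type*} [NormedAddCommGroup V]
    [InnerProductSpace ℝ V] [FiniteDimensional ℝ V]
    (Lop : V →ₗ[ℝ] V) (hsym : ∀ x y : V, ⟪Lop x, y⟫ = ⟪x, Lop y⟫)
    (lam1 a : ℝ) (μe : V) (heig : Lop μe = lam1 • μe)
    (hmax : ∀ x : V, ⟪x, Lop x⟫ ≤ lam1 * ‖x‖^2)
    (hmult : ∀ x : V, Lop x = lam1 • x → ∃ c : ℝ, x = c • μe)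
    (ha : (1/2) * ‖μe‖^2 = a) (hapos : 0 < a) :
    ∃ Φ : ℝ → ℝ, ContDiff ℝ (⊤ : ℕ∞) Φ ∧ deriv Φ a = -lam1 ∧ deriv (deriv Φ) a < 0 ∧
      ∀ δ : V, δ ≠ 0 →
        ⟪δ, Lop δ⟫ + deriv Φ a * ‖δ‖^2 + deriv (deriv Φ) a * ⟪μe, δ⟫^2 < 0 := by
  refine ⟨fun t => -lam1 * t - (t - a)^2, ?_, ?_, ?_, ?_⟩
  case _ =>
    apply ContDiff.sub
    · exact (contDiff_const.mul contDiff_id)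
    · exact (contDiff_id.sub contDiff_const).pow 2
  all_goals
    have hd1 : deriv (fun t => -lam1 * t - (t - a)^2) = fun t => -lam1 - 2 * (t - a) := by
      funext t
      have h : HasDerivAt (fun t => -lam1 * t - (t - a)^2) (-lam1 - 2 * (t - a)) t := by
        have h1 : HasDerivAt (fun t : ℝ => -lam1 * t) (-lam1) t := by
          simpa using (hasDerivAt_id t).const_mul (-lam1)
        have h2 : HasDerivAt (fun t : ℝ => (t - a)^2) (2 * (t - a)) t := by
          have := ((hasDerivAt_id t).sub_const a).pow 2
          simpa [mul_comm, Pi.pow_def] using this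
        exact h1.sub h2
      exact h.deriv
    have hd2' : deriv (fun t : ℝ => -lam1 - 2 * (t - a)) a = -2 := by
      have h : HasDerivAt (fun t : ℝ => -lam1 - 2 * (t - a)) (-2) a := by
        have : HasDerivAt (fun t : ℝ => 2 * (t - a)) 2 a := by
          simpa using ((hasDerivAt_id a).sub_const a).const_mul 2
        simpa [Pi.sub_def] using (hasDerivAt_const a (-lam1)).sub this
      exact h.deriv
    have hd2 : deriv (deriv (fun t => -lam1 * t - (t - a)^2)) a = -2 := by
      rw [hd1]; exact hd2'
  case _ => rw [hd1]; simp
  case _ => rw [hd2]; norm_num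
  case _ =>
    intro δ hδ
    simp only [hd1, hd2']
    simp only [sub_self, mul_zero, sub_zero]
    have hle := hmax δ
    rcases lt_or_eq_of_le hle with hlt | heq
    · nlinarith [sq_nonneg ((⟪μe, δ⟫ : ℝ))]
    · have heigδ := eig_of_eq Lop hsym lam1 hmax δ heq
      obtain ⟨c, hc⟩ := hmult δ heigδ
      have hc0 : c ≠ 0 := by
        intro h; apply hδ; rw [hc, h, zero_smul]
      have hip : (⟪μe, δ⟫ : ℝ) = c * ‖μe‖^2 := by
        rw [hc, real_inner_smul_right, real_inner_self_eq_norm_sq]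
      have hμe : ‖μe‖^2 = 2 * a := by linarith
      have hipne : (⟪μe, δ⟫ : ℝ) ≠ 0 := by
        rw [hip, hμe]; positivity
      have : 0 < (⟪μe, δ⟫ : ℝ) ^ 2 := by positivity
      nlinarith [this, heq]
end

section
/- Energy-Casimir stability (lowest eigenvalue): with 𝕃 symmetric, smallest eigenvalue λ_min of multiplicity one, and μₑ an eigenvector for λ_min with ½‖μₑ‖² = a > 0, for any choice Φ'(a) = -λ_min and Φ''(a) > 0 the quadratic form δμ ↦ ⟨δμ, (𝕃 - λ_min)δμ⟩ + Φ''(a)⟨μₑ, δμ⟩² is positive definite. -/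
open RealInnerProductSpace

/-- Energy-Casimir stability at the lowest eigenvalue: with `𝕃` symmetric,
`λ_min` its smallest eigenvalue of multiplicity one, and `μₑ` an eigenvector
with `½‖μₑ‖² = a > 0`, for any `Φ''(a) > 0` the quadratic form
`δμ ↦ ⟨δμ, (𝕃 - λ_min)δμ⟩ + Φ''(a)⟨μₑ, δμ⟩²` is positive definite. -/
theorem energy_casimir_min_stable {V : Type*} [NormedAddCommGroup V]
    [InnerProductSpace ℝ V] [FiniteDimensional ℝ V]
    (Lop : V →ₗ[ℝ] V) (hsym : ∀ x y : V, ⟪Lop x, y⟫ = ⟪x, Lop y⟫)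
    (lammin a : ℝ) (μe : V) (hμe : μe ≠ 0) (heig : Lop μe = lammin • μe)
    (hmin : ∀ x : V, lammin * ‖x‖^2 ≤ ⟪x, Lop x⟫)
    (hmult : ∀ x : V, Lop x = lammin • x → ∃ c : ℝ, x = c • μe)
    (ha : (1/2) * ‖μe‖^2 = a) :
    ∀ c : ℝ, 0 < c → ∀ δ : V, δ ≠ 0 →
      0 < ⟪δ, Lop δ⟫ - lammin * ‖δ‖^2 + c * ⟪μe, δ⟫^2 := by
  intro c hc δ hδ
  have hQ : ∀ x : V, 0 ≤ ⟪x, Lop x⟫ - lammin * ‖x‖ ^ 2 := fun x => by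
    have := hmin x; linarith
  by_cases h0 : ⟪δ, Lop δ⟫ - lammin * ‖δ‖ ^ 2 = 0
  · -- δ is an eigenvector for lammin
    set w : V := Lop δ - lammin • δ with hw
    have hwδ : ⟪w, Lop δ⟫ - lammin * ⟪w, δ⟫ = ‖w‖ ^ 2 := by
      have : ⟪w, w⟫ = ‖w‖ ^ 2 := real_inner_self_eq_norm_sq w
      rw [hw] at this ⊢
      rw [inner_sub_right, inner_smul_right] at this
      linarith
    have hs : ⟪δ, Lop w⟫ = ⟪w, Lop δ⟫ := by
      rw [← hsym, real_inner_comm]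
    have key : ∀ t : ℝ, 0 ≤ 2 * t * ‖w‖ ^ 2 + t ^ 2 * (⟪w, Lop w⟫ - lammin * ‖w‖ ^ 2) := by
      intro t
      have h1 := hQ (δ + t • w)
      have hn : ‖δ + t • w‖ ^ 2 = ‖δ‖ ^ 2 + 2 * (t * ⟪δ, w⟫) + t ^ 2 * ‖w‖ ^ 2 := by
        rw [norm_add_sq_real, inner_smul_right, norm_smul]
        ring_nf
        simp [mul_pow]
      rw [map_add, map_smul, inner_add_left, inner_add_right, inner_add_right,
        inner_smul_left, inner_smul_right, inner_smul_left, inner_smul_right, hn] at h1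
      simp only [starRingEnd_apply, star_trivial] at h1
      have hδw : ⟪δ, w⟫ = ⟪w, δ⟫ := real_inner_comm _ _
      have e1 : t * ⟪δ, Lop w⟫ = t * ⟪w, Lop δ⟫ := by rw [hs]
      have e2 : t * ⟪δ, w⟫ = t * ⟪w, δ⟫ := by rw [hδw]
      have e3 : t * (⟪w, Lop δ⟫ - lammin * ⟪w, δ⟫) = t * ‖w‖ ^ 2 := by rw [hwδ]
      have e4 : t * (t * ⟪w, Lop w⟫) = t ^ 2 * ⟪w, Lop w⟫ := by ring
      have e5 : lammin * (t * ⟪δ, w⟫) = lammin * (t * ⟪w, δ⟫) := by rw [hδw]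
      have e6 : t * (lammin * ⟪w, δ⟫) = lammin * (t * ⟪w, δ⟫) := by ring
      linarith [h1, e1, e2, e3, e4, e5, e6, h0]
    have hw0 : w = 0 := by
      by_contra hwne
      have hb : 0 < ‖w‖ ^ 2 := by
        have := norm_pos_iff.mpr hwne
        positivity
      set q : ℝ := ⟪w, Lop w⟫ - lammin * ‖w‖ ^ 2 with hq
      have hq0 : 0 ≤ q := hQ w
      have hk := key (-‖w‖ ^ 2 / (q + 1))
      have hq1 : 0 < q + 1 := by linarith
      rw [div_pow, neg_pow] at hk
      have : 0 ≤ (2 * (-‖w‖ ^ 2 / (q + 1)) * ‖w‖ ^ 2 + (-‖w‖ ^ 2 / (q + 1)) ^ 2 * q) * (q + 1) ^ 2 := by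
        have := key (-‖w‖ ^ 2 / (q + 1))
        positivity
      have hexp : (2 * (-‖w‖ ^ 2 / (q + 1)) * ‖w‖ ^ 2 + (-‖w‖ ^ 2 / (q + 1)) ^ 2 * q) * (q + 1) ^ 2
          = (‖w‖ ^ 2) ^ 2 * (-q - 2) := by
        field_simp
        ring
      rw [hexp] at this
      nlinarith [this, hb, hq0]
    have heigδ : Lop δ = lammin • δ := by
      have := sub_eq_zero.mp hw0
      exact this
    obtain ⟨k, hk⟩ := hmult δ heigδ
    have hkne : k ≠ 0 := by
      intro h; apply hδ; rw [hk, h, zero_smul]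
    have hinner : ⟪μe, δ⟫ = k * ‖μe‖ ^ 2 := by
      rw [hk, inner_smul_right, real_inner_self_eq_norm_sq]
    have hμn : (0:ℝ) < ‖μe‖ ^ 2 := by
      have := norm_pos_iff.mpr hμe
      positivity
    have : 0 < c * ⟪μe, δ⟫ ^ 2 := by
      rw [hinner]
      have : k * ‖μe‖ ^ 2 ≠ 0 := mul_ne_zero hkne (by positivity)
      positivity
    linarith [this, h0.ge, h0.le]
  · have h1 : 0 < ⟪δ, Lop δ⟫ - lammin * ‖δ‖ ^ 2 := lt_of_le_of_ne (hQ δ) (Ne.symm h0)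
    nlinarith [sq_nonneg ⟪μe, δ⟫]
end

section
/- Block positive-definiteness via Schur complement, applied to heavy top stability: the block matrix [[X, λ𝟙],[λ𝟙, Z]] with X symmetric positive definite is positive definite if and only if Z - λ²X⁻¹ is positive definite. In particular, take X = 𝕀̄⁻¹, so that X⁻¹ = 𝕀̄; if Z = λ₂𝟙 - M + λ̂·aₑaₑᵀ with M symmetric, and 𝕃(λ) := -λ²𝕀̄ - M satisfies 𝕃(λ)aₑ = -λ₂aₑ with -λ₂ the smallest eigenvalue of 𝕃(λ), of multiplicity one, then for λ̂ > 0 the Schur complement Z - λ²𝕀̄ = 𝕃(λ) + λ₂𝟙 + λ̂ aₑaₑᵀ is positive definite. -/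
open RealInnerProductSpace

/-- Block positive-definiteness via the Schur complement, applied to heavy top
stability: the block quadratic form of `[[X, λ𝟙],[λ𝟙, Z]]` with
`X = 𝕀̄⁻¹` symmetric positive definite is positive definite iff
`Z - λ²X⁻¹ = Z - λ²𝕀̄` is positive definite; and with
`Z = λ₂𝟙 - M + λ̂ aₑaₑᵀ`, `𝕃(λ)aₑ = -λ₂aₑ`, `-λ₂` the smallest eigenvalue of
`𝕃(λ) = -λ²𝕀̄ - M` with multiplicity one, and `λ̂ > 0`, the Schur complement
`𝕃(λ) + λ₂𝟙 + λ̂ aₑaₑᵀ` is positive definite. -/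
theorem heavy_top_schur_stability {V : Type*} [NormedAddCommGroup V]
    [InnerProductSpace ℝ V] [FiniteDimensional ℝ V]
    (Ibar : V ≃ₗ[ℝ] V)
    (hIsym : ∀ x y : V, ⟪Ibar x, y⟫ = ⟪x, Ibar y⟫)
    (hIpos : ∀ x : V, x ≠ 0 → 0 < ⟪x, Ibar x⟫)
    (M : V →ₗ[ℝ] V) (hMsym : ∀ x y : V, ⟪M x, y⟫ = ⟪x, M y⟫)
    (lam lam2 lamhat : ℝ) (ae : V) (hae : ae ≠ 0)
    (Lop : V →ₗ[ℝ] V) (hLdef : ∀ v, Lop v = (-(lam^2)) • Ibar v - M v)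
    (heig : Lop ae = (-lam2) • ae)
    (hmin : ∀ v : V, (-lam2) * ‖v‖^2 ≤ ⟪v, Lop v⟫)
    (hmult : ∀ v : V, Lop v = (-lam2) • v → ∃ c : ℝ, v = c • ae)
    (Z : V →ₗ[ℝ] V)
    (hZ : ∀ v, Z v = lam2 • v - M v + (lamhat * ⟪ae, v⟫) • ae)
    (hlamhat : 0 < lamhat) :
    ((∀ x y : V, ¬(x = 0 ∧ y = 0) →
        0 < ⟪x, Ibar.symm x⟫ + 2 * lam * ⟪x, y⟫ + ⟪y, Z y⟫) ↔
      (∀ y : V, y ≠ 0 → 0 < ⟪y, Z y⟫ - lam^2 * ⟪y, Ibar y⟫)) ∧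
    (∀ v : V, v ≠ 0 → 0 < ⟪v, Lop v⟫ + lam2 * ‖v‖^2 + lamhat * ⟪ae, v⟫^2) := by
  -- symmetry of Ibar.symm
  have hIsymm' : ∀ x y : V, ⟪Ibar.symm x, y⟫ = ⟪x, Ibar.symm y⟫ := by
    intro x y
    have h := hIsym (Ibar.symm x) (Ibar.symm y)
    simpa using h.symm
  have hXpos : ∀ w : V, w ≠ 0 → 0 < ⟪w, Ibar.symm w⟫ := by
    intro w hw
    have hu : Ibar.symm w ≠ 0 := by
      simp [hw]
    have := hIpos (Ibar.symm w) hu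
    calc (0:ℝ) < ⟪Ibar.symm w, Ibar (Ibar.symm w)⟫ := this
      _ = ⟪Ibar.symm w, w⟫ := by simp
      _ = ⟪w, Ibar.symm w⟫ := real_inner_comm _ _
  have hXnonneg : ∀ w : V, 0 ≤ ⟪w, Ibar.symm w⟫ := by
    intro w
    by_cases hw : w = 0
    · simp [hw]
    · exact le_of_lt (hXpos w hw)
  -- key identity
  have key : ∀ x y : V,
      ⟪x, Ibar.symm x⟫ + 2 * lam * ⟪x, y⟫ + ⟪y, Z y⟫
        = ⟪x + lam • Ibar y, Ibar.symm (x + lam • Ibar y)⟫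
          + (⟪y, Z y⟫ - lam^2 * ⟪y, Ibar y⟫) := by
    intro x y
    have h1 : ⟪Ibar y, Ibar.symm x⟫ = ⟪x, y⟫ := by
      rw [hIsym]
      simp [real_inner_comm]
    have h2 : ⟪Ibar y, y⟫ = ⟪y, Ibar y⟫ := real_inner_comm _ _
    have hexp : Ibar.symm (x + lam • Ibar y) = Ibar.symm x + lam • y := by
      simp [map_add, map_smul]
    rw [hexp]
    simp only [inner_add_left, inner_add_right, real_inner_smul_left,
      real_inner_smul_right, h1, h2]
    ring
  constructor
  · constructor
    · intro hblock y hy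
      have := hblock (-(lam • Ibar y)) y (by simp [hy])
      have hk := key (-(lam • Ibar y)) y
      rw [hk] at this
      simpa using this
    · intro hschur x y hxy
      rw [key x y]
      by_cases hy : y = 0
      · have hx : x ≠ 0 := fun h => hxy ⟨h, hy⟩
        have h1 : 0 < ⟪x + lam • Ibar y, Ibar.symm (x + lam • Ibar y)⟫ := by
          apply hXpos
          simpa [hy] using hx
        have h2 : ⟪y, Z y⟫ - lam^2 * ⟪y, Ibar y⟫ = 0 := by simp [hy]
        linarith
      · have h1 := hXnonneg (x + lam • Ibar y)
        have h2 := hschur y hy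
        linarith
  · -- part 2
    have hLsym : ∀ x y : V, ⟪Lop x, y⟫ = ⟪x, Lop y⟫ := by
      intro x y
      rw [hLdef, hLdef]
      simp only [inner_sub_left, inner_sub_right, real_inner_smul_left,
        real_inner_smul_right, hIsym x y, hMsym x y]
    -- bilinear form B v w = ⟪v, Lop w⟫ + lam2 * ⟪v, w⟫
    set B : V → V → ℝ := fun v w => ⟪v, Lop w⟫ + lam2 * ⟪v, w⟫ with hBdef
    have hBsymm : ∀ v w, B v w = B w v := by
      intro v w
      have e1 : ⟪v, Lop w⟫ = ⟪w, Lop v⟫ := (real_inner_comm (Lop w) v).trans (hLsym w v)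
      have e2 : ⟪v, w⟫ = ⟪w, v⟫ := real_inner_comm _ _
      simp only [hBdef]
      rw [e1, e2]
    have hBnonneg : ∀ v, 0 ≤ B v v := by
      intro v
      have := hmin v
      have hn : ⟪v, v⟫ = ‖v‖^2 := real_inner_self_eq_norm_sq v
      simp only [hBdef, hn]
      linarith
    intro v hv
    have hBv := hBnonneg v
    rcases lt_or_eq_of_le hBv with hlt | heq
    · have h2 : 0 ≤ lamhat * ⟪ae, v⟫^2 := by positivity
      have hn : ⟪v, v⟫ = ‖v‖^2 := real_inner_self_eq_norm_sq v
      simp only [hBdef, hn] at hlt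
      linarith
    · -- B v v = 0, equality case
      have hBv0 : B v v = 0 := heq.symm
      have hBvw : ∀ w, B v w = 0 := by
        intro w
        by_contra hne
        set ε : ℝ := 1 / (B w w + 1) with hε
        have hww : 0 ≤ B w w := hBnonneg w
        have hεpos : 0 < ε := by positivity
        have hεB : ε * B w w < 2 := by
          rw [hε, div_mul_eq_mul_div, div_lt_iff₀ (by linarith)]
          nlinarith
        have hexp : B (v + (-(ε * B v w)) • w) (v + (-(ε * B v w)) • w)
            = B v v + 2 * (-(ε * B v w)) * B v w + (-(ε * B v w))^2 * B w w := by
          have e1 : ⟪w, Lop v⟫ = ⟪v, Lop w⟫ := (hLsym w v).symm.trans (real_inner_comm _ _)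
          have e2 : ⟪w, v⟫ = ⟪v, w⟫ := real_inner_comm _ _
          simp only [hBdef, map_add, map_smul, inner_add_left, inner_add_right,
            real_inner_smul_left, real_inner_smul_right, e1, e2]
          ring
        have hge := hBnonneg (v + (-(ε * B v w)) • w)
        rw [hexp, hBv0] at hge
        have hBvw2 : 0 < B v w ^ 2 := by positivity
        have hid : 2 * -(ε * B v w) * B v w + (-(ε * B v w))^2 * B w w
            = ε * B v w ^ 2 * (ε * B w w - 2) := by ring
        have hneg : ε * B v w ^ 2 * (ε * B w w - 2) < 0 :=
          mul_neg_of_pos_of_neg (by positivity) (by linarith)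
        linarith
      have hLv : Lop v = (-lam2) • v := by
        have h0 : ∀ w, ⟪Lop v + lam2 • v, w⟫ = 0 := by
          intro w
          have := hBvw w
          simp only [hBdef] at this
          rw [inner_add_left, real_inner_smul_left, hLsym v w]
          exact this
        have := h0 (Lop v + lam2 • v)
        have hz : Lop v + lam2 • v = 0 := by
          rwa [inner_self_eq_zero] at this
        have h1 : Lop v = -(lam2 • v) := eq_neg_of_add_eq_zero_left hz
        rw [neg_smul]
        exact h1
      obtain ⟨c, hc⟩ := hmult v hLv
      have hcne : c ≠ 0 := by
        intro h
        exact hv (by simp [hc, h])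
      have hav : ⟪ae, v⟫ = c * ‖ae‖^2 := by
        rw [hc, real_inner_smul_right, real_inner_self_eq_norm_sq]
      have havne : ⟪ae, v⟫ ≠ 0 := by
        rw [hav]
        have : ‖ae‖ ≠ 0 := norm_ne_zero_iff.mpr hae
        positivity
      have h2 : 0 < lamhat * ⟪ae, v⟫^2 := by positivity
      have hn : ⟪v, v⟫ = ‖v‖^2 := real_inner_self_eq_norm_sq v
      simp only [hBdef, hn] at hBv0
      linarith
end
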